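/- arXiv:1404.3948 — 6 statements merged into one kernel-verified Lean document; each statement's English description precedes it below -/
import Mathlib

section
/- For all integers f ≥ 1 and k ≥ 0, the number of points (x_1,...,x_f) in ℤ^f with |x_1| + ... + |x_f| ≤ k equals ∑_{i=0}^{f} 2^i * C(f,i) * C(k,i). -/
open Finset

private def D (f k : ℕ) : ℕ := ∑ i ∈ range (f+1), 2^i * f.choose i * k.choose i

private lemma hockey (k i : ℕ) : ∑ m ∈ range k, m.choose i = k.choose (i+1) := by
  induction k with
  | zero => simp
  | succ k ih => rw [sum_range_succ, ih, Nat.choose_succ_succ, Nat.add_comm]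

private lemma D_rec (f k : ℕ) : D (f+1) k = D f k + 2 * ∑ m ∈ range k, D f m := by
  have h2 : 2 * ∑ m ∈ range k, D f m
      = ∑ i ∈ range (f+1), 2^(i+1) * f.choose i * k.choose (i+1) := by
    unfold D
    simp only [Finset.mul_sum]
    rw [Finset.sum_comm]
    refine Finset.sum_congr rfl fun i _ => ?_
    rw [← hockey k i, Finset.mul_sum]
    refine Finset.sum_congr rfl fun m _ => ?_
    ring
  rw [h2]
  unfold D
  rw [Finset.sum_range_succ' (fun i => 2^i * (f+1).choose i * k.choose i) (f+1)]
  rw [Finset.sum_range_succ' (fun i => 2^i * f.choose i * k.choose i) f]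
  simp only [Nat.choose_succ_succ, pow_zero, Nat.choose_zero_right, mul_one, one_mul]
  have : ∑ i ∈ range (f+1), 2^(i+1) * (f.choose i + f.choose (i+1)) * k.choose (i+1)
      = ∑ i ∈ range (f+1), 2^(i+1) * f.choose i * k.choose (i+1)
        + ∑ i ∈ range (f+1), 2^(i+1) * f.choose (i+1) * k.choose (i+1) := by
    rw [← Finset.sum_add_distrib]
    refine Finset.sum_congr rfl fun i _ => ?_
    ring
  rw [this]
  rw [Finset.sum_range_succ (fun i => 2^(i+1) * f.choose (i+1) * k.choose (i+1)) f]
  simp [Nat.choose_succ_self]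
  ring

private instance instFinLee (f k : ℕ) : Finite {x : Fin f → ℤ // (∑ i, (x i).natAbs) ≤ k} := by
  refine Finite.of_injective
    (fun x => (fun i => (⟨x.1 i, ?_⟩ : Finset.Icc (-(k:ℤ)) k)) : _ → Fin f → Finset.Icc (-(k:ℤ)) k)
    ?_
  · have h1 : (x.1 i).natAbs ≤ k :=
      le_trans (Finset.single_le_sum (f := fun j => (x.1 j).natAbs) (fun _ _ => Nat.zero_le _)
        (Finset.mem_univ i)) x.2
    simp only [Finset.mem_Icc]
    omega
  · intro a b hab
    ext i
    exact Subtype.ext_iff.mp (congrFun hab i)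

private noncomputable instance instFtLee (f k : ℕ) :
    Fintype {x : Fin f → ℤ // (∑ i, (x i).natAbs) ≤ k} := Fintype.ofFinite _

private def leeEquiv (f k : ℕ) :
    {x : Fin (f+1) → ℤ // (∑ i, (x i).natAbs) ≤ k} ≃
      Σ j : Finset.Icc (-(k:ℤ)) (k:ℤ),
        {y : Fin f → ℤ // (∑ i, (y i).natAbs) ≤ k - ((j : ℤ)).natAbs} where
  toFun x := ⟨⟨x.1 0, by
      have h := x.2
      rw [Fin.sum_univ_succ] at h
      simp only [Finset.mem_Icc]; omega⟩,
    ⟨fun i => x.1 i.succ, by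
      have h := x.2
      rw [Fin.sum_univ_succ] at h
      show (∑ i : Fin f, (x.1 i.succ).natAbs) ≤ k - (x.1 0).natAbs
      omega⟩⟩
  invFun p := ⟨Fin.cons p.1.1 p.2.1, by
    rw [Fin.sum_univ_succ]
    simp only [Fin.cons_zero, Fin.cons_succ]
    have h1 := p.1.2
    simp only [Finset.mem_Icc] at h1
    have h2 := p.2.2
    omega⟩
  left_inv x := by
    ext i
    exact Fin.cases rfl (fun j => rfl) i
  right_inv p := by
    ext
    · rfl
    · simp [Fin.cons_succ]

private lemma N_rec (f k : ℕ) :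
    Nat.card {x : Fin (f+1) → ℤ // (∑ i, (x i).natAbs) ≤ k}
      = ∑ j ∈ Finset.Icc (-(k:ℤ)) (k:ℤ),
          Nat.card {y : Fin f → ℤ // (∑ i, (y i).natAbs) ≤ k - j.natAbs} := by
  rw [Nat.card_congr (leeEquiv f k), Nat.card_eq_fintype_card, Fintype.card_sigma]
  rw [← Finset.sum_coe_sort (Finset.Icc (-(k:ℤ)) (k:ℤ))
      (fun j => Nat.card {y : Fin f → ℤ // (∑ i, (y i).natAbs) ≤ k - j.natAbs})]
  exact Finset.sum_congr rfl fun j _ => (Nat.card_eq_fintype_card).symm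

private lemma sum_Icc_abs (g : ℕ → ℕ) (k : ℕ) :
    ∑ j ∈ Finset.Icc (-(k:ℤ)) (k:ℤ), g j.natAbs
      = ∑ m ∈ range (k+1), g m + ∑ m ∈ range k, g (m+1) := by
  have hsplit : Finset.Icc (-(k:ℤ)) (k:ℤ)
      = Finset.Icc (-(k:ℤ)) (-1) ∪ Finset.Icc (0:ℤ) k := by
    ext j; simp only [Finset.mem_Icc, Finset.mem_union]; omega
  have hdisj : Disjoint (Finset.Icc (-(k:ℤ)) (-1)) (Finset.Icc (0:ℤ) k) := by
    rw [Finset.disjoint_left]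
    intro j h1 h2
    simp only [Finset.mem_Icc] at h1 h2
    omega
  rw [hsplit, Finset.sum_union hdisj, add_comm]
  congr 1
  · refine Finset.sum_nbij' (fun j => j.toNat) (fun m => (m : ℤ)) ?_ ?_ ?_ ?_ ?_
    · intro a ha; simp only [Finset.mem_Icc] at ha; simp only [Finset.mem_range]; omega
    · intro a ha; simp only [Finset.mem_range] at ha; simp only [Finset.mem_Icc]; omega
    · intro a ha; simp only [Finset.mem_Icc] at ha; omega
    · intro a _; simp
    · intro a ha; simp only [Finset.mem_Icc] at ha; congr 1; omega
  · refine Finset.sum_nbij' (fun j => (-j).toNat - 1) (fun m => -((m : ℤ) + 1)) ?_ ?_ ?_ ?_ ?_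
    · intro a ha; simp only [Finset.mem_Icc] at ha; simp only [Finset.mem_range]; omega
    · intro a ha; simp only [Finset.mem_range] at ha; simp only [Finset.mem_Icc]; omega
    · intro a ha; simp only [Finset.mem_Icc] at ha; omega
    · intro a ha; simp only [Finset.mem_range] at ha; omega
    · intro a ha; simp only [Finset.mem_Icc] at ha; congr 1; omega

private lemma main_eq (f k : ℕ) :
    Nat.card {x : Fin f → ℤ // (∑ i, (x i).natAbs) ≤ k} = D f k := by
  induction f generalizing k with
  | zero =>
    haveI : Unique {x : Fin 0 → ℤ // (∑ i, (x i).natAbs) ≤ k} :=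
      ⟨⟨⟨finZeroElim, by simp⟩⟩, fun a => Subtype.ext (funext fun i => i.elim0)⟩
    rw [Nat.card_unique]
    simp [D]
  | succ f ih =>
    rw [N_rec]
    have : ∀ j ∈ Finset.Icc (-(k:ℤ)) (k:ℤ),
        Nat.card {y : Fin f → ℤ // (∑ i, (y i).natAbs) ≤ k - j.natAbs}
          = D f (k - j.natAbs) := fun j _ => ih (k - j.natAbs)
    rw [Finset.sum_congr rfl this, sum_Icc_abs (fun m => D f (k - m)) k]
    have h1 : ∑ m ∈ range (k+1), D f (k - m) = ∑ m ∈ range (k+1), D f m := by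
      have := Finset.sum_range_reflect (fun m => D f m) (k+1)
      simpa using this
    have h2 : ∑ m ∈ range k, D f (k - (m+1)) = ∑ m ∈ range k, D f m := by
      rw [← Finset.sum_range_reflect (fun m => D f m) k]
      refine Finset.sum_congr rfl fun m hm => ?_
      rw [Finset.mem_range] at hm
      congr 1
      omega
    rw [h1, h2, Finset.sum_range_succ, D_rec]
    ring

theorem lee_sphere_card (f k : ℕ) (hf : 1 ≤ f) :
    Nat.card {x : Fin f → ℤ // (∑ i, (x i).natAbs) ≤ k} =
      ∑ i ∈ Finset.range (f + 1), 2 ^ i * Nat.choose f i * Nat.choose k i := by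
  exact main_eq f k
end

section
/- For every integer k ≥ 1, the Cayley graph of ℤ_{4k} with connection set {1, -1, 2k} has diameter at most k. -/
/-- The circulant graph on `ZMod n` with connection set `C` (symmetrized). -/
def circulantGraph (n : ℕ) (C : Set (ZMod n)) : SimpleGraph (ZMod n) :=
  SimpleGraph.fromRel (fun i j => j - i ∈ C)

namespace Deg3Aux

abbrev Gk (k : ℕ) : SimpleGraph (ZMod (4 * k)) :=
  circulantGraph (4 * k) {1, -1, (2 * k : ZMod (4 * k))}

lemma adj_add (k : ℕ) (x c : ZMod (4 * k))
    (hc : c ∈ ({1, -1, (2 * k : ZMod (4 * k))} : Set (ZMod (4 * k)))) (hc0 : c ≠ 0) :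
    (Gk k).Adj x (x + c) := by
  rw [Gk, circulantGraph, SimpleGraph.fromRel_adj]
  refine ⟨?_, Or.inl ?_⟩
  · intro h
    exact hc0 (by simpa using h.symm)
  · simpa using hc

lemma one_ne_zero' (k : ℕ) (hk : 1 ≤ k) : (1 : ZMod (4 * k)) ≠ 0 := by
  haveI : Fact (1 < 4 * k) := ⟨by omega⟩
  exact one_ne_zero

lemma two_k_ne_zero (k : ℕ) (hk : 1 ≤ k) : (2 * k : ZMod (4 * k)) ≠ 0 := by
  haveI : NeZero (4 * k) := ⟨by omega⟩
  have : ((2 * k : ℕ) : ZMod (4 * k)) ≠ 0 := by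
    rw [Ne, ZMod.natCast_eq_zero_iff]
    intro h
    have := Nat.le_of_dvd (by omega) h
    omega
  simpa using this

lemma exists_walk_add (k : ℕ) (hk : 1 ≤ k) :
    ∀ (m : ℕ) (x : ZMod (4 * k)),
      ∃ w : (Gk k).Walk x (x + (m : ZMod (4 * k))), w.length = m := by
  intro m
  induction m with
  | zero =>
    intro x
    exact ⟨(SimpleGraph.Walk.nil : (Gk k).Walk x x).copy rfl (by simp), by simp⟩
  | succ n ih =>
    intro x
    obtain ⟨w, hw⟩ := ih (x + 1)
    have hadj : (Gk k).Adj x (x + 1) :=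
      adj_add k x 1 (by simp) (one_ne_zero' k hk)
    have heq : x + 1 + (n : ZMod (4 * k)) = x + ((n + 1 : ℕ) : ZMod (4 * k)) := by
      push_cast; ring
    exact ⟨(SimpleGraph.Walk.cons hadj w).copy rfl heq, by simp [hw]⟩

lemma exists_walk_sub (k : ℕ) (hk : 1 ≤ k) :
    ∀ (m : ℕ) (x : ZMod (4 * k)),
      ∃ w : (Gk k).Walk x (x - (m : ZMod (4 * k))), w.length = m := by
  intro m
  induction m with
  | zero =>
    intro x
    exact ⟨(SimpleGraph.Walk.nil : (Gk k).Walk x x).copy rfl (by simp), by simp⟩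
  | succ n ih =>
    intro x
    obtain ⟨w, hw⟩ := ih (x + (-1))
    have hadj : (Gk k).Adj x (x + (-1)) :=
      adj_add k x (-1) (by simp) (neg_ne_zero.mpr (one_ne_zero' k hk))
    have heq : x + (-1) - (n : ZMod (4 * k)) = x - ((n + 1 : ℕ) : ZMod (4 * k)) := by
      push_cast; ring
    exact ⟨(SimpleGraph.Walk.cons hadj w).copy rfl heq, by simp [hw]⟩

lemma dist_add (k : ℕ) (hk : 1 ≤ k) (m : ℕ) (x : ZMod (4 * k)) :
    (Gk k).dist x (x + (m : ZMod (4 * k))) ≤ m := by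
  obtain ⟨w, hw⟩ := exists_walk_add k hk m x
  exact le_trans (SimpleGraph.dist_le w) (le_of_eq hw)

lemma dist_sub (k : ℕ) (hk : 1 ≤ k) (m : ℕ) (x : ZMod (4 * k)) :
    (Gk k).dist x (x - (m : ZMod (4 * k))) ≤ m := by
  obtain ⟨w, hw⟩ := exists_walk_sub k hk m x
  exact le_trans (SimpleGraph.dist_le w) (le_of_eq hw)

lemma dist_jump_add (k : ℕ) (hk : 1 ≤ k) (m : ℕ) (x : ZMod (4 * k)) :
    (Gk k).dist x (x + (2 * k : ZMod (4 * k)) + (m : ZMod (4 * k))) ≤ 1 + m := by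
  obtain ⟨w, hw⟩ := exists_walk_add k hk m (x + (2 * k : ZMod (4 * k)))
  have hadj : (Gk k).Adj x (x + (2 * k : ZMod (4 * k))) :=
    adj_add k x _ (by simp) (two_k_ne_zero k hk)
  have := SimpleGraph.dist_le (SimpleGraph.Walk.cons hadj w)
  simpa [hw, Nat.add_comm] using this

lemma dist_jump_sub (k : ℕ) (hk : 1 ≤ k) (m : ℕ) (x : ZMod (4 * k)) :
    (Gk k).dist x (x + (2 * k : ZMod (4 * k)) - (m : ZMod (4 * k))) ≤ 1 + m := by
  obtain ⟨w, hw⟩ := exists_walk_sub k hk m (x + (2 * k : ZMod (4 * k)))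
  have hadj : (Gk k).Adj x (x + (2 * k : ZMod (4 * k))) :=
    adj_add k x _ (by simp) (two_k_ne_zero k hk)
  have := SimpleGraph.dist_le (SimpleGraph.Walk.cons hadj w)
  simpa [hw, Nat.add_comm] using this

end Deg3Aux

open Deg3Aux in
theorem degree3_diameter (k : ℕ) (hk : 1 ≤ k) :
    ∀ i j : ZMod (4 * k),
      (circulantGraph (4 * k) {1, -1, (2 * k : ZMod (4 * k))}).dist i j ≤ k := by
  intro i j
  haveI : NeZero (4 * k) := ⟨by omega⟩
  set v : ℕ := (j - i).val with hv
  have hvlt : v < 4 * k := ZMod.val_lt _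
  have hvj : j = i + (v : ZMod (4 * k)) := by
    rw [hv, ZMod.natCast_val, ZMod.cast_id]; ring
  show (Gk k).dist i j ≤ k
  rcases le_or_gt v k with h1 | h1
  · rw [hvj]
    exact le_trans (dist_add k hk v i) h1
  · rcases le_or_gt v (2 * k) with h2 | h2
    · -- v = 2k - m, m := 2k - v ≤ k - 1
      set m : ℕ := 2 * k - v with hm
      have hmv : m + v = 2 * k := by omega
      have hcast : (v : ZMod (4 * k)) = (2 * k : ZMod (4 * k)) - (m : ZMod (4 * k)) := by
        have : ((m : ℕ) : ZMod (4 * k)) + ((v : ℕ) : ZMod (4 * k)) = ((2 * k : ℕ) : ZMod (4 * k)) := by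
          rw [← Nat.cast_add, hmv]
        push_cast at this ⊢
        linear_combination this
      have hj' : j = i + (2 * k : ZMod (4 * k)) - (m : ZMod (4 * k)) := by
        rw [hvj, hcast]; ring
      rw [hj']
      have := dist_jump_sub k hk m i
      omega
    · rcases le_or_gt (3 * k) v with h3 | h3
      · -- v = 4k - m, m := 4k - v ≤ k
        set m : ℕ := 4 * k - v with hm
        have hmv : m + v = 4 * k := by omega
        have hcast : (v : ZMod (4 * k)) = -(m : ZMod (4 * k)) := by
          have h0 : ((m : ℕ) : ZMod (4 * k)) + ((v : ℕ) : ZMod (4 * k)) = 0 := by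
            rw [← Nat.cast_add, hmv, ZMod.natCast_self]
          linear_combination h0
        have hj' : j = i - (m : ZMod (4 * k)) := by
          rw [hvj, hcast]; ring
        rw [hj']
        have := dist_sub k hk m i
        omega
      · -- 2k < v < 3k, m := v - 2k ≤ k - 1
        set m : ℕ := v - 2 * k with hm
        have hmv : 2 * k + m = v := by omega
        have hcast : (v : ZMod (4 * k)) = (2 * k : ZMod (4 * k)) + (m : ZMod (4 * k)) := by
          have : ((2 * k : ℕ) : ZMod (4 * k)) + ((m : ℕ) : ZMod (4 * k)) = ((v : ℕ) : ZMod (4 * k)) := by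
            rw [← Nat.cast_add, hmv]
          push_cast at this ⊢
          linear_combination this.symm
        have hj' : j = i + (2 * k : ZMod (4 * k)) + (m : ZMod (4 * k)) := by
          rw [hvj, hcast]; ring
        rw [hj']
        have := dist_jump_add k hk m i
        omega
end

section
/- For every integer k ≥ 1, every element of ℤ_{2k²+2k+1} can be written as a·1 + b·(2k+1) with integers a, b satisfying |a| + |b| ≤ k; consequently the circulant graph on ℤ_{2k²+2k+1} with generators {1, 2k+1} has diameter at most k. -/
lemma deg4_cast_eq (k : ℕ) (v : ZMod (2 * k ^ 2 + 2 * k + 1)) (a b : ℤ)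
    (h : a + b * (2 * (k : ℤ) + 1) = (v.val : ℤ) ∨
         a + b * (2 * (k : ℤ) + 1) = (v.val : ℤ) - (2 * (k : ℤ) ^ 2 + 2 * k + 1)) :
    v = (a : ZMod (2 * k ^ 2 + 2 * k + 1)) * 1 +
        (b : ZMod (2 * k ^ 2 + 2 * k + 1)) * ((2 * k + 1 : ℕ) : ZMod (2 * k ^ 2 + 2 * k + 1)) := by
  haveI : NeZero (2 * k ^ 2 + 2 * k + 1) := ⟨by positivity⟩
  have hv : ((v.val : ℕ) : ZMod (2 * k ^ 2 + 2 * k + 1)) = v := by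
    rw [ZMod.natCast_val, ZMod.cast_id]
  have hzero : ((2 * k ^ 2 + 2 * k + 1 : ℕ) : ZMod (2 * k ^ 2 + 2 * k + 1)) = 0 :=
    ZMod.natCast_self _
  push_cast at hzero
  rcases h with h | h
  · have h2 : ((a + b * (2 * (k : ℤ) + 1) : ℤ) : ZMod (2 * k ^ 2 + 2 * k + 1))
        = ((v.val : ℤ) : ZMod (2 * k ^ 2 + 2 * k + 1)) := by rw [h]
    push_cast at h2
    rw [← hv]; push_cast
    linear_combination -h2
  · have h2 : ((a + b * (2 * (k : ℤ) + 1) : ℤ) : ZMod (2 * k ^ 2 + 2 * k + 1))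
        = (((v.val : ℤ) - (2 * (k : ℤ) ^ 2 + 2 * k + 1) : ℤ) : ZMod (2 * k ^ 2 + 2 * k + 1)) := by
      rw [h]
    push_cast at h2
    rw [← hv]; push_cast
    linear_combination -h2 + hzero

/-- Part 1: every residue has a short representation. -/
lemma deg4_rep_exists (k : ℕ) (hk : 1 ≤ k) (v : ZMod (2 * k ^ 2 + 2 * k + 1)) :
    ∃ a b : ℤ, v = (a : ZMod (2 * k ^ 2 + 2 * k + 1)) * 1 +
        (b : ZMod (2 * k ^ 2 + 2 * k + 1)) * ((2 * k + 1 : ℕ) : ZMod (2 * k ^ 2 + 2 * k + 1)) ∧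
      a.natAbs + b.natAbs ≤ k := by
  haveI : NeZero (2 * k ^ 2 + 2 * k + 1) := ⟨by positivity⟩
  set K : ℤ := (k : ℤ) with hK
  have hK1 : 1 ≤ K := by rw [hK]; exact_mod_cast hk
  set M : ℤ := (v.val : ℤ) with hM
  have hM0 : 0 ≤ M := Int.natCast_nonneg _
  have hMlt : M < 2 * K ^ 2 + 2 * K + 1 := by
    have := ZMod.val_lt v
    rw [hM, hK]; exact_mod_cast this
  set B : ℤ := (M + K) / (2 * K + 1) with hB
  set r : ℤ := (M + K) % (2 * K + 1) with hr
  have hdm : (2 * K + 1) * B + r = M + K := Int.mul_ediv_add_emod (M + K) (2 * K + 1)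
  have hr0 : 0 ≤ r := Int.emod_nonneg _ (by omega)
  have hrlt : r < 2 * K + 1 := Int.emod_lt_of_pos _ (by omega)
  have hB0 : 0 ≤ B := Int.ediv_nonneg (by omega) (by omega)
  have hBle : B ≤ K := by nlinarith
  set A : ℤ := M - B * (2 * K + 1) with hA
  have hAlb : -K ≤ A := by rw [hA]; linarith
  have hAub : A ≤ K := by rw [hA]; linarith
  have hAB : A + B * (2 * K + 1) = M := by rw [hA]; ring
  by_cases hA0 : 0 ≤ A
  · by_cases hs : A + B ≤ K
    · exact ⟨A, B, deg4_cast_eq k v A B (Or.inl hAB), by omega⟩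
    · refine ⟨A - (K + 1), B - K, deg4_cast_eq k v _ _ (Or.inr ?_), by omega⟩
      rw [hA]; ring
  · by_cases hs : B - A ≤ K
    · exact ⟨A, B, deg4_cast_eq k v A B (Or.inl hAB), by omega⟩
    · refine ⟨A + K, B - (K + 1), deg4_cast_eq k v _ _ (Or.inr ?_), by omega⟩
      rw [hA]; ring

noncomputable abbrev deg4Gr (k : ℕ) : SimpleGraph (ZMod (2 * k ^ 2 + 2 * k + 1)) :=
  circulantGraph (2 * k ^ 2 + 2 * k + 1)
    {1, -1, ((2 * k + 1 : ℕ) : ZMod (2 * k ^ 2 + 2 * k + 1)),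
      -((2 * k + 1 : ℕ) : ZMod (2 * k ^ 2 + 2 * k + 1))}

lemma deg4_one_ne_zero (k : ℕ) (hk : 1 ≤ k) : (1 : ZMod (2 * k ^ 2 + 2 * k + 1)) ≠ 0 := by
  haveI : Fact (1 < 2 * k ^ 2 + 2 * k + 1) := ⟨by nlinarith⟩
  exact one_ne_zero

lemma deg4_g_ne_zero (k : ℕ) (hk : 1 ≤ k) :
    ((2 * k + 1 : ℕ) : ZMod (2 * k ^ 2 + 2 * k + 1)) ≠ 0 := by
  rw [Ne, ZMod.natCast_eq_zero_iff]
  intro h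
  have := Nat.le_of_dvd (by omega) h
  nlinarith

lemma deg4_adj_step (k : ℕ) (hk : 1 ≤ k) (i : ZMod (2 * k ^ 2 + 2 * k + 1))
    (c : ZMod (2 * k ^ 2 + 2 * k + 1))
    (hc : c ∈ ({1, -1, ((2 * k + 1 : ℕ) : ZMod (2 * k ^ 2 + 2 * k + 1)),
      -((2 * k + 1 : ℕ) : ZMod (2 * k ^ 2 + 2 * k + 1))} : Set (ZMod (2 * k ^ 2 + 2 * k + 1))))
    (hc0 : c ≠ 0) : (deg4Gr k).Adj i (i + c) := by
  rw [deg4Gr, circulantGraph, SimpleGraph.fromRel_adj]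
  constructor
  · intro h
    apply hc0
    have := h
    rwa [left_eq_add] at this
  · left; simpa using hc

lemma deg4_walk_exists (k : ℕ) (hk : 1 ≤ k) (m : ℕ) :
    ∀ (a b : ℤ) (i : ZMod (2 * k ^ 2 + 2 * k + 1)), a.natAbs + b.natAbs ≤ m →
      ∃ p : (deg4Gr k).Walk i (i + (a : ZMod (2 * k ^ 2 + 2 * k + 1)) +
          (b : ZMod (2 * k ^ 2 + 2 * k + 1)) * ((2 * k + 1 : ℕ) : ZMod (2 * k ^ 2 + 2 * k + 1))),
        p.length ≤ m := by
  induction m with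
  | zero =>
    intro a b i h
    have ha : a = 0 := by omega
    have hb : b = 0 := by omega
    subst ha hb
    have he : i = i + ((0 : ℤ) : ZMod (2 * k ^ 2 + 2 * k + 1)) +
        ((0 : ℤ) : ZMod (2 * k ^ 2 + 2 * k + 1)) * ((2 * k + 1 : ℕ) : ZMod (2 * k ^ 2 + 2 * k + 1)) := by
      push_cast; ring
    exact ⟨(SimpleGraph.Walk.nil' i).copy rfl he, by simp⟩
  | succ m ih =>
    intro a b i h
    set g : ZMod (2 * k ^ 2 + 2 * k + 1) := ((2 * k + 1 : ℕ) : ZMod (2 * k ^ 2 + 2 * k + 1)) with hg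
    by_cases ha0 : a = 0
    · by_cases hb0 : b = 0
      · subst ha0 hb0
        have he : i = i + ((0 : ℤ) : ZMod (2 * k ^ 2 + 2 * k + 1)) +
            ((0 : ℤ) : ZMod (2 * k ^ 2 + 2 * k + 1)) * g := by push_cast; ring
        exact ⟨(SimpleGraph.Walk.nil' i).copy rfl he, by simp⟩
      · by_cases hbpos : 0 < b
        · obtain ⟨p, hp⟩ := ih a (b - 1) (i + g) (by omega)
          have he : i + g + (a : ZMod (2 * k ^ 2 + 2 * k + 1)) +
              ((b - 1 : ℤ) : ZMod (2 * k ^ 2 + 2 * k + 1)) * g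
              = i + (a : ZMod (2 * k ^ 2 + 2 * k + 1)) + (b : ZMod (2 * k ^ 2 + 2 * k + 1)) * g := by
            push_cast; ring
          refine ⟨SimpleGraph.Walk.cons (deg4_adj_step k hk i g (by simp [hg])
            (deg4_g_ne_zero k hk)) (p.copy rfl he), ?_⟩
          simpa using Nat.succ_le_succ hp
        · have hbneg : b < 0 := by omega
          obtain ⟨p, hp⟩ := ih a (b + 1) (i + (-g)) (by omega)
          have he : i + (-g) + (a : ZMod (2 * k ^ 2 + 2 * k + 1)) +
              ((b + 1 : ℤ) : ZMod (2 * k ^ 2 + 2 * k + 1)) * g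
              = i + (a : ZMod (2 * k ^ 2 + 2 * k + 1)) + (b : ZMod (2 * k ^ 2 + 2 * k + 1)) * g := by
            push_cast; ring
          refine ⟨SimpleGraph.Walk.cons (deg4_adj_step k hk i (-g) (by simp [hg])
            (neg_ne_zero.mpr (deg4_g_ne_zero k hk))) (p.copy rfl he), ?_⟩
          simpa using Nat.succ_le_succ hp
    · by_cases hapos : 0 < a
      · obtain ⟨p, hp⟩ := ih (a - 1) b (i + 1) (by omega)
        have he : i + 1 + ((a - 1 : ℤ) : ZMod (2 * k ^ 2 + 2 * k + 1)) +
            (b : ZMod (2 * k ^ 2 + 2 * k + 1)) * g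
            = i + (a : ZMod (2 * k ^ 2 + 2 * k + 1)) + (b : ZMod (2 * k ^ 2 + 2 * k + 1)) * g := by
          push_cast; ring
        refine ⟨SimpleGraph.Walk.cons (deg4_adj_step k hk i 1 (by simp)
          (deg4_one_ne_zero k hk)) (p.copy rfl he), ?_⟩
        simpa using Nat.succ_le_succ hp
      · have haneg : a < 0 := by omega
        obtain ⟨p, hp⟩ := ih (a + 1) b (i + (-1)) (by omega)
        have he : i + (-1) + ((a + 1 : ℤ) : ZMod (2 * k ^ 2 + 2 * k + 1)) +
            (b : ZMod (2 * k ^ 2 + 2 * k + 1)) * g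
            = i + (a : ZMod (2 * k ^ 2 + 2 * k + 1)) + (b : ZMod (2 * k ^ 2 + 2 * k + 1)) * g := by
          push_cast; ring
        refine ⟨SimpleGraph.Walk.cons (deg4_adj_step k hk i (-1) (by simp)
          (neg_ne_zero.mpr (deg4_one_ne_zero k hk))) (p.copy rfl he), ?_⟩
        simpa using Nat.succ_le_succ hp

theorem degree4_diameter (k : ℕ) (hk : 1 ≤ k) :
    (∀ v : ZMod (2 * k ^ 2 + 2 * k + 1),
      ∃ a b : ℤ, v = (a : ZMod (2 * k ^ 2 + 2 * k + 1)) * 1 +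
          (b : ZMod (2 * k ^ 2 + 2 * k + 1)) * ((2 * k + 1 : ℕ) : ZMod (2 * k ^ 2 + 2 * k + 1)) ∧
        a.natAbs + b.natAbs ≤ k) ∧
    (∀ i j : ZMod (2 * k ^ 2 + 2 * k + 1),
      (circulantGraph (2 * k ^ 2 + 2 * k + 1)
        {1, -1, ((2 * k + 1 : ℕ) : ZMod (2 * k ^ 2 + 2 * k + 1)),
          -((2 * k + 1 : ℕ) : ZMod (2 * k ^ 2 + 2 * k + 1))}).dist i j ≤ k) := by
  refine ⟨deg4_rep_exists k hk, ?_⟩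
  intro i j
  obtain ⟨a, b, hv, hab⟩ := deg4_rep_exists k hk (j - i)
  obtain ⟨p, hp⟩ := deg4_walk_exists k hk k a b i hab
  have hj : i + (a : ZMod (2 * k ^ 2 + 2 * k + 1)) +
      (b : ZMod (2 * k ^ 2 + 2 * k + 1)) * ((2 * k + 1 : ℕ) : ZMod (2 * k ^ 2 + 2 * k + 1)) = j := by
    rw [mul_one] at hv
    linear_combination -hv
  have hle := SimpleGraph.dist_le (p.copy rfl hj)
  calc (deg4Gr k).dist i j ≤ (p.copy rfl hj).length := hle
    _ = p.length := by simp
    _ ≤ k := hp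
end

section
/- For every integer k ≥ 2, every element of ℤ_{4k²} can be written as a·1 + b·(2k-1) + c·(2k²) with integers a, b, c satisfying |a| + |b| + |c| ≤ k and c ∈ {0,1}; consequently the circulant graph on ℤ_{4k²} with connection set {±1, ±(2k-1), 2k²} has diameter at most k. -/
namespace SimpleGraph

variable {α : Type*} [AddGroup α] {G : SimpleGraph α} {s : α}

lemma edist_add_nsmul_le (h : ∀ x, G.edist x (x + s) ≤ 1) (x : α) (n : ℕ) :
    G.edist x (x + n • s) ≤ n := by
  induction n with
  | zero => simp
  | succ n ih =>
    calc G.edist x (x + (n + 1) • s)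
        ≤ G.edist x (x + n • s) + G.edist (x + n • s) (x + n • s + s) := by
          rw [succ_nsmul, ← add_assoc]; exact G.edist_triangle
      _ ≤ n + 1 := add_le_add ih (h _)

lemma edist_add_zsmul_le (h : ∀ x, G.edist x (x + s) ≤ 1) (x : α) (m : ℤ) :
    G.edist x (x + m • s) ≤ m.natAbs := by
  obtain ⟨n, rfl | rfl⟩ := Int.eq_nat_or_neg m
  · simpa using G.edist_add_nsmul_le h x n
  · rw [edist_comm]
    simpa using G.edist_add_nsmul_le h (x + (-n : ℤ) • s) n

end SimpleGraph

lemma circulantGraph_edist_add_zsmul_le {n : ℕ} {C : Set (ZMod n)} {s : ZMod n} (hs : s ∈ C)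
    (x : ZMod n) (m : ℤ) : (circulantGraph n C).edist x (x + m • s) ≤ m.natAbs := by
  refine SimpleGraph.edist_add_zsmul_le (fun y => ?_) x m
  rw [SimpleGraph.edist_le_one_iff_adj_or_eq]
  by_cases h : s = 0
  · simp [h]
  · simp [circulantGraph, SimpleGraph.fromRel_adj, h, hs]

lemma exists_short_repr_of_nonneg {k : ℕ} (hk : 1 ≤ k) {u : ℤ} (h0 : 0 ≤ u)
    (h1 : u ≤ 2 * k ^ 2 + k - 1) :
    ∃ a b c : ℤ, c ∈ ({0, 1} : Set ℤ) ∧ a + b * (2 * k - 1) + c * (2 * k ^ 2) = u ∧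
      a.natAbs + b.natAbs + c.natAbs ≤ k := by
  have hd : ((2 * k - 1 : ℕ) : ℤ) = 2 * k - 1 := by omega
  have hu := Int.bdiv_add_bmod u (2 * k - 1)
  have hlo := Int.le_bmod (x := u) (m := 2 * k - 1) (by omega)
  have hhi := Int.bmod_lt (x := u) (m := 2 * k - 1) (by omega)
  rw [hd, mul_comm] at hu
  rw [hd] at hlo hhi
  set q := u.bdiv (2 * k - 1)
  set a := u.bmod (2 * k - 1)
  obtain ⟨ha_lo, ha_hi⟩ : 1 - (k : ℤ) ≤ a ∧ a ≤ k - 1 := by omega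
  have hk' : (1 : ℤ) ≤ k := by exact_mod_cast hk
  have hq0 : 0 ≤ q := by nlinarith
  have hq1 : q ≤ k + 1 := by nlinarith
  by_cases hsmall : q + a.natAbs ≤ k
  · exact ⟨a, q, 0, by simp, by linear_combination hu, by omega⟩
  by_cases hpos : 1 ≤ a
  · have hqk : q ≤ k := by nlinarith
    exact ⟨a - k, q - k, 1, by simp, by linear_combination hu, by omega⟩
  · exact ⟨a + k - 1, q - k - 1, 1, by simp, by linear_combination hu, by omega⟩

lemma ZMod.exists_short_repr {k : ℕ} (hk : 1 ≤ k) (v : ZMod (4 * k ^ 2)) :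
    ∃ a b c : ℤ, c ∈ ({0, 1} : Set ℤ) ∧
      v = (a : ZMod (4 * k ^ 2)) * 1 +
          (b : ZMod (4 * k ^ 2)) * ((2 * (k : ℤ) - 1 : ℤ) : ZMod (4 * k ^ 2)) +
          (c : ZMod (4 * k ^ 2)) * ((2 * k ^ 2 : ℕ) : ZMod (4 * k ^ 2)) ∧
      a.natAbs + b.natAbs + c.natAbs ≤ k := by
  have : NeZero (4 * k ^ 2) := ⟨by positivity⟩
  have hu : (v.valMinAbs.natAbs : ℤ) ≤ 2 * k ^ 2 := by
    have := v.natAbs_valMinAbs_le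
    exact_mod_cast (show v.valMinAbs.natAbs ≤ 2 * k ^ 2 by omega)
  rw [← v.coe_valMinAbs]
  rcases le_total 0 v.valMinAbs with h | h
  · obtain ⟨a, b, c, hc, he, hcost⟩ := exists_short_repr_of_nonneg hk h (by omega)
    refine ⟨a, b, c, hc, ?_, hcost⟩
    rw [← he]; push_cast; ring
  · obtain ⟨a, b, c, hc, he, hcost⟩ := exists_short_repr_of_nonneg hk (neg_nonneg.mpr h) (by omega)
    refine ⟨-a, -b, c, hc, ?_, by simpa using hcost⟩
    have hzero : ((4 * k ^ 2 : ℕ) : ZMod (4 * k ^ 2)) = 0 := ZMod.natCast_self _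
    have he' := congrArg (fun z : ℤ => (z : ZMod (4 * k ^ 2))) he
    push_cast at he' hzero ⊢
    linear_combination he' - c * hzero

theorem degree5_diameter (k : ℕ) (hk : 2 ≤ k) :
    (∀ v : ZMod (4 * k ^ 2),
      ∃ a b c : ℤ, c ∈ ({0, 1} : Set ℤ) ∧
        v = (a : ZMod (4 * k ^ 2)) * 1 +
            (b : ZMod (4 * k ^ 2)) * ((2 * (k : ℤ) - 1 : ℤ) : ZMod (4 * k ^ 2)) +
            (c : ZMod (4 * k ^ 2)) * ((2 * k ^ 2 : ℕ) : ZMod (4 * k ^ 2)) ∧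
        a.natAbs + b.natAbs + c.natAbs ≤ k) ∧
    (∀ i j : ZMod (4 * k ^ 2),
      (circulantGraph (4 * k ^ 2)
        {1, -1, ((2 * (k : ℤ) - 1 : ℤ) : ZMod (4 * k ^ 2)),
          -((2 * (k : ℤ) - 1 : ℤ) : ZMod (4 * k ^ 2)),
          ((2 * k ^ 2 : ℕ) : ZMod (4 * k ^ 2))}).dist i j ≤ k) := by
  have repr := ZMod.exists_short_repr (k := k) (by omega)
  refine ⟨repr, fun i j => ENat.toNat_le_of_le_natCast ?_⟩
  obtain ⟨a, b, c, -, hv, hcost⟩ := repr (j - i)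
  set g : ZMod (4 * k ^ 2) := ((2 * (k : ℤ) - 1 : ℤ) : ZMod (4 * k ^ 2))
  set h : ZMod (4 * k ^ 2) := ((2 * k ^ 2 : ℕ) : ZMod (4 * k ^ 2))
  set G := circulantGraph (4 * k ^ 2) {1, -1, g, -g, h}
  have hj : j = i + a • 1 + b • g + c • h := by
    simp only [zsmul_eq_mul]; linear_combination hv
  calc G.edist i j
      ≤ G.edist i (i + a • 1) + G.edist (i + a • 1) (i + a • 1 + b • g)
        + G.edist (i + a • 1 + b • g) (i + a • 1 + b • g + c • h) := by
        rw [hj]; exact G.edist_triangle.trans (add_le_add_left G.edist_triangle _)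
    _ ≤ a.natAbs + b.natAbs + c.natAbs := by
        gcongr <;> exact circulantGraph_edist_add_zsmul_le (by simp) _ _
    _ ≤ k := mod_cast hcost
end

section
/- Let a ≥ 1 be an integer and let L ⊆ ℤ⁴ be the lattice generated by w₁ = (-a+1, a+1, -a+1, a), w₂ = (a+1, a+1, -a+2, a-1), w₃ = (-a-1, a-1, a-1, -a), w₄ = (-a, a, a, a-1). Then the absolute value of the determinant of the 4×4 matrix with rows w₁, w₂, w₃, w₄ equals 8a⁴ - 8a³ + 12a² - 4a. -/
theorem degree8_odd_lattice_det_eq (a : ℤ) :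
    (Matrix.of ![![-a + 1, a + 1, -a + 1, a],
                  ![a + 1, a + 1, -a + 2, a - 1],
                  ![-a - 1, a - 1, a - 1, -a],
                  ![-a, a, a, a - 1]] : Matrix (Fin 4) (Fin 4) ℤ).det =
      -(8 * a ^ 4 - 8 * a ^ 3 + 12 * a ^ 2 - 4 * a) := by
  rw [Matrix.det_succ_row_zero]
  simp [Fin.sum_univ_succ, Matrix.det_fin_three, Fin.succAbove]
  ring

/-- Over `ℤ`, `a ≤ a ^ 2` gives
`8a⁴ - 8a³ + 12a² - 4a = 8a² (a² - a) + 4 (a² - a) + 8a² ≥ 0`. -/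
theorem Int.degree8_odd_order_nonneg (a : ℤ) :
    0 ≤ 8 * a ^ 4 - 8 * a ^ 3 + 12 * a ^ 2 - 4 * a := by
  have h : 0 ≤ a ^ 2 - a := sub_nonneg.2 (Int.le_self_sq a)
  nlinarith [mul_nonneg (sq_nonneg a) h, sq_nonneg a]

theorem degree8_odd_lattice_det_general (a : ℤ) :
    |(Matrix.of ![![-a + 1, a + 1, -a + 1, a],
                  ![a + 1, a + 1, -a + 2, a - 1],
                  ![-a - 1, a - 1, a - 1, -a],
                  ![-a, a, a, a - 1]] : Matrix (Fin 4) (Fin 4) ℤ).det| =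
      8 * a ^ 4 - 8 * a ^ 3 + 12 * a ^ 2 - 4 * a := by
  rw [degree8_odd_lattice_det_eq, abs_neg, abs_of_nonneg (Int.degree8_odd_order_nonneg a)]

theorem degree8_odd_lattice_det (a : ℤ) (ha : 1 ≤ a) :
    |(Matrix.of ![![-a + 1, a + 1, -a + 1, a],
                  ![a + 1, a + 1, -a + 2, a - 1],
                  ![-a - 1, a - 1, a - 1, -a],
                  ![-a, a, a, a - 1]] : Matrix (Fin 4) (Fin 4) ℤ).det| =
      8 * a ^ 4 - 8 * a ^ 3 + 12 * a ^ 2 - 4 * a :=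
  degree8_odd_lattice_det_general a
end

section
/- Every element of ℤ_{104} can be written as a·1 + b·16 + c·20 + d·27 with integers a,b,c,d satisfying |a|+|b|+|c|+|d| ≤ 3; consequently the circulant graph on ℤ_{104} with generators {1, 16, 20, 27} has diameter at most 3. -/
namespace Z104aux

abbrev C0 : Finset (ZMod 104) := {0, 1, -1, 16, -16, 20, -20, 27, -27}

set_option maxRecDepth 20000 in
lemma decomp3 : ∀ v : ZMod 104, ∃ x ∈ C0, ∃ y ∈ C0, ∃ z ∈ C0, v = x + y + z := by decide

lemma coeff (x : ZMod 104) (hx : x ∈ C0) :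
    ∃ a b c d : ℤ, x = (a : ZMod 104) * 1 + (b : ZMod 104) * 16 + (c : ZMod 104) * 20 +
      (d : ZMod 104) * 27 ∧ a.natAbs + b.natAbs + c.natAbs + d.natAbs ≤ 1 := by
  fin_cases hx
  · exact ⟨0,0,0,0, by push_cast; ring, by norm_num⟩
  · exact ⟨1,0,0,0, by push_cast; ring, by norm_num⟩
  · exact ⟨-1,0,0,0, by push_cast; ring, by norm_num⟩
  · exact ⟨0,1,0,0, by push_cast; ring, by norm_num⟩
  · exact ⟨0,-1,0,0, by push_cast; ring, by norm_num⟩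
  · exact ⟨0,0,1,0, by push_cast; ring, by norm_num⟩
  · exact ⟨0,0,-1,0, by push_cast; ring, by norm_num⟩
  · exact ⟨0,0,0,1, by push_cast; ring, by norm_num⟩
  · exact ⟨0,0,0,-1, by push_cast; ring, by norm_num⟩

abbrev G := circulantGraph 104 {1, -1, 16, -16, 20, -20, 27, -27}

lemma step (i x : ZMod 104) (hx : x ∈ C0) : ∃ p : G.Walk i (i + x), p.length ≤ 1 := by
  by_cases h0 : x = 0
  · subst h0
    exact ⟨SimpleGraph.Walk.nil.copy rfl (add_zero i).symm, by simp⟩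
  · have hadj : G.Adj i (i + x) := by
      simp only [circulantGraph, SimpleGraph.fromRel_adj, Set.mem_insert_iff, Set.mem_singleton_iff]
      constructor
      · intro h; exact h0 (by linear_combination -h)
      · left
        simp only [add_sub_cancel_left]
        fin_cases hx
        · exact absurd rfl h0
        all_goals simp
    exact ⟨hadj.toWalk, by simp⟩

end Z104aux

open Z104aux in
theorem zmod104_diameter_three :
    (∀ v : ZMod 104, ∃ a b c d : ℤ,
      v = (a : ZMod 104) * 1 + (b : ZMod 104) * 16 + (c : ZMod 104) * 20 + (d : ZMod 104) * 27 ∧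
        a.natAbs + b.natAbs + c.natAbs + d.natAbs ≤ 3) ∧
    (∀ i j : ZMod 104,
      (circulantGraph 104 {1, -1, 16, -16, 20, -20, 27, -27}).dist i j ≤ 3) := by
  constructor
  · intro v
    obtain ⟨x, hx, y, hy, z, hz, hv⟩ := decomp3 v
    obtain ⟨a1, b1, c1, d1, e1, f1⟩ := coeff x hx
    obtain ⟨a2, b2, c2, d2, e2, f2⟩ := coeff y hy
    obtain ⟨a3, b3, c3, d3, e3, f3⟩ := coeff z hz
    refine ⟨a1+a2+a3, b1+b2+b3, c1+c2+c3, d1+d2+d3, ?_, ?_⟩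
    · rw [hv, e1, e2, e3]; push_cast; ring
    · have ha := Int.natAbs_add_le (a1+a2) a3
      have ha' := Int.natAbs_add_le a1 a2
      have hb := Int.natAbs_add_le (b1+b2) b3
      have hb' := Int.natAbs_add_le b1 b2
      have hc := Int.natAbs_add_le (c1+c2) c3
      have hc' := Int.natAbs_add_le c1 c2
      have hd := Int.natAbs_add_le (d1+d2) d3
      have hd' := Int.natAbs_add_le d1 d2
      linarith
  · intro i j
    obtain ⟨x, hx, y, hy, z, hz, hv⟩ := decomp3 (j - i)
    obtain ⟨p1, l1⟩ := step i x hx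
    obtain ⟨p2, l2⟩ := step (i + x) y hy
    obtain ⟨p3, l3⟩ := step (i + x + y) z hz
    have hj : i + x + y + z = j := by linear_combination -hv
    have hd := SimpleGraph.dist_le (((p1.append p2).append p3).copy rfl hj)
    simp only [SimpleGraph.Walk.length_copy, SimpleGraph.Walk.length_append] at hd
    exact hd.trans (by omega)
end
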